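/- If S ⊆ ℝᵖ is compact and nonempty, then the truncated moment cone R_d(S) = cone{[ξ]_d : ξ ∈ S} is closed. -/

import Mathlib

/-! Every `[ξ]_d` has first coordinate `1`, so the cone is the cone over the convex hull `C` of
`{[ξ]_d : ξ ∈ S}`: every point `z ≠ 0` of it is `z₀ • c` with `c ∈ C`. The vectors `[ξ]_d` live in a
finite-dimensional space, where Carathéodory's theorem makes `C` compact. Hence the part of the
cone with `z₀ ≤ M` is the image of the compact set `[0, M] × C`, so it is closed, and
closedness of the whole cone follows since it is a local property. -/

/-- The total degree of a monomial exponent. -/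
def fdeg {p : ℕ} (α : Fin p →₀ ℕ) : ℕ := α.sum fun _ e => e

/-- The truncated monomial vector `[ξ]_d`, viewed as a truncated moment sequence. -/
def momVec (p d : ℕ) (ξ : Fin p → ℝ) : (Fin p →₀ ℕ) → ℝ :=
  fun α => if fdeg α ≤ d then ∏ i, ξ i ^ α i else 0

/-- The truncated moment cone `R_d(S) = cone{[ξ]_d : ξ ∈ S}`. -/
def momCone (p d : ℕ) (S : Set (Fin p → ℝ)) : Set ((Fin p →₀ ℕ) → ℝ) :=
  {z | ∃ (r : ℕ) (θ : Fin r → ℝ) (u : Fin r → (Fin p → ℝ)),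
    (∀ i, 0 ≤ θ i) ∧ (∀ i, u i ∈ S) ∧ z = ∑ i, θ i • momVec p d (u i)}

open Set Function Module Pointwise

section ConvexHull

variable {E : Type*} [AddCommGroup E] [Module ℝ E] [FiniteDimensional ℝ E]

/-- Carathéodory: `finrank ℝ E + 1` points of `K` suffice for every point of its convex hull. -/
theorem convexHull_eq_image_stdSimplex_pi (K : Set E) :
    convexHull ℝ K = (fun q : (Fin (finrank ℝ E + 1) → ℝ) × (Fin (finrank ℝ E + 1) → E) =>
      ∑ i, q.1 i • q.2 i) '' (stdSimplex ℝ _ ×ˢ univ.pi fun _ => K) := by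
  refine Subset.antisymm (fun x hx => ?_) ?_
  · obtain ⟨k₀, hk₀⟩ : K.Nonempty := convexHull_nonempty_iff.1 ⟨x, hx⟩
    obtain ⟨ι, _, z, w, hzK, hz, hw0, hw1, rfl⟩ := eq_pos_convex_span_of_mem_convexHull hx
    obtain ⟨e⟩ : Nonempty (ι ↪ Fin (finrank ℝ E + 1)) := Embedding.nonempty_of_card_le <| by
      simpa using hz.card_le_finrank_succ.trans (Nat.add_le_add_right (Submodule.finrank_le _) 1)
    have hw_off (j) (hj : j ∉ range e) : extend e w 0 j = 0 := extend_apply' _ _ _ hj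
    refine ⟨(extend e w 0, extend e z fun _ => k₀), ⟨⟨fun j => ?_, ?_⟩, fun j _ => ?_⟩, ?_⟩
    · by_cases hj : j ∈ range e
      · obtain ⟨i, rfl⟩ := hj
        simpa [e.injective.extend_apply] using (hw0 i).le
      · simp [hw_off j hj]
    · rw [← hw1]
      exact (Fintype.sum_of_injective e e.injective _ _ hw_off fun i =>
        (e.injective.extend_apply _ _ _).symm).symm
    · by_cases hj : j ∈ range e
      · obtain ⟨i, rfl⟩ := hj
        simpa [e.injective.extend_apply] using hzK (mem_range_self i)
      · simpa [extend_apply' _ _ _ hj] using hk₀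
    · refine (Fintype.sum_of_injective e e.injective _ _ (fun j hj => ?_) fun i => ?_).symm
      · simp [hw_off j hj]
      · simp [e.injective.extend_apply]
  · rintro _ ⟨⟨w, v⟩, ⟨hw, hv⟩, rfl⟩
    exact mem_convexHull_of_exists_fintype w v hw.1 hw.2 (fun i => hv i (mem_univ i)) rfl

variable [TopologicalSpace E] [ContinuousAdd E] [ContinuousSMul ℝ E]

theorem IsCompact.convexHull {K : Set E} (hK : IsCompact K) : IsCompact (convexHull ℝ K) := by
  rw [convexHull_eq_image_stdSimplex_pi]
  exact (IsCompact.prod (isCompact_stdSimplex ℝ _) (isCompact_univ_pi fun _ => hK)).image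
    (by fun_prop)

end ConvexHull

section ConicHull

variable {E : Type*} [AddCommGroup E] [Module ℝ E]

theorem PointedCone.hull_subset_insert_zero_smul_convexHull (K : Set E) :
    (PointedCone.hull ℝ K : Set E) ⊆ insert 0 (Ici (0 : ℝ) • convexHull ℝ K) := by
  intro x hx
  induction hx using Submodule.span_induction with
  | mem x hx => exact Or.inr ⟨1, mem_Ici.2 zero_le_one, x, subset_convexHull ℝ K hx, one_smul ℝ x⟩
  | zero => exact mem_insert 0 _
  | add x y _ _ hx hy =>
    rcases hx with rfl | ⟨s, (hs : 0 ≤ s), c, hc, rfl⟩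
    · simpa using hy
    rcases hy with rfl | ⟨t, (ht : 0 ≤ t), c', hc', rfl⟩
    · simpa using Or.inr ⟨s, hs, c, hc, rfl⟩
    rcases (add_nonneg hs ht).eq_or_lt with hst | hst
    · obtain ⟨rfl, rfl⟩ := (add_eq_zero_iff_of_nonneg hs ht).1 hst.symm
      simp
    refine Or.inr ⟨s + t, hst.le, (s / (s + t)) • c + (t / (s + t)) • c',
      convex_convexHull ℝ K hc hc' (div_nonneg hs hst.le) (div_nonneg ht hst.le) ?_, ?_⟩
    · field_simp
    · simp only [smul_add, smul_smul, mul_div_cancel₀ _ hst.ne']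
  | smul a x _ hx =>
    rcases hx with rfl | ⟨s, (hs : 0 ≤ s), c, hc, rfl⟩
    · simp
    · exact Or.inr ⟨a * s, mul_nonneg a.2 hs, c, hc, (smul_smul (a : ℝ) s c).symm⟩

variable [TopologicalSpace E] [ContinuousSMul ℝ E] [T2Space E]

theorem PointedCone.isClosed_hull_of_isCompact_convexHull {K : Set E}
    (hK : IsCompact (convexHull ℝ K)) (f : E →L[ℝ] ℝ) (hf : ∀ x ∈ K, f x = 1) :
    IsClosed (PointedCone.hull ℝ K : Set E) := by
  set C := convexHull ℝ K
  -- `f (t • c) = t` on the cone over `C`, so below each level of `f` the cone is compact.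
  have hfC : ∀ c ∈ C, f c = 1 := convexHull_min hf (convex_hyperplane f.isLinear 1)
  have hCK : C ⊆ PointedCone.hull ℝ K :=
    convexHull_min PointedCone.subset_hull (PointedCone.convex _)
  have hbounded (M : ℝ) :
      {x | f x < M} ∩ PointedCone.hull ℝ K ⊆ insert 0 (Icc 0 M • C) := by
    rintro x ⟨hxM : f x < M, hx⟩
    rcases hull_subset_insert_zero_smul_convexHull K hx with rfl | ⟨t, ht, c, hc, rfl⟩
    · exact mem_insert _ _
    · refine Or.inr ⟨t, ⟨ht, ?_⟩, c, hc, rfl⟩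
      simpa [hfC c hc] using hxM.le
  have hcone (M : ℝ) : insert 0 (Icc 0 M • C) ⊆ PointedCone.hull ℝ K := by
    refine insert_subset (zero_mem _) ?_
    rintro _ ⟨t, ht, c, hc, rfl⟩
    exact (PointedCone.hull ℝ K).smul_mem ht.1 (hCK hc)
  refine isClosed_of_closure_subset fun z hz => hcone (f z + 1) ?_
  have hU : IsOpen {x | f x < f z + 1} := isOpen_lt f.continuous continuous_const
  exact (((isCompact_Icc.smul_set hK).insert 0).isClosed.closure_subset_iff.2 (hbounded _))
    (hU.inter_closure ⟨show f z < f z + 1 from lt_add_one _, hz⟩)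

end ConicHull

/-- The space of moment sequences is infinite-dimensional, but `[ξ]_d` only involves the finitely
many exponents of degree at most `d`. -/
lemma momVec_eq_extend (p d : ℕ) (ξ : Fin p → ℝ) :
    momVec p d ξ = extend (Subtype.val : {α : Fin p →₀ ℕ // fdeg α ≤ d} → Fin p →₀ ℕ)
      (fun α => ∏ i, ξ i ^ (α : Fin p →₀ ℕ) i) 0 := by
  funext α
  by_cases hα : fdeg α ≤ d
  · rw [momVec, if_pos hα]
    exact (Subtype.val_injective.extend_apply (fun β : {α // fdeg α ≤ d} => ∏ i, ξ i ^ β.1 i) 0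
      ⟨α, hα⟩).symm
  · rw [extend_apply' _ _ _ fun ⟨β, hβ⟩ => hα (hβ ▸ β.2)]
    simp [momVec, hα]

lemma momVec_apply_zero (p d : ℕ) (ξ : Fin p → ℝ) : momVec p d ξ 0 = 1 := by
  simp [momVec, fdeg]

lemma isCompact_convexHull_image_momVec (p d : ℕ) {S : Set (Fin p → ℝ)} (hS : IsCompact S) :
    IsCompact (convexHull ℝ (momVec p d '' S)) := by
  have : Finite {α : Fin p →₀ ℕ // fdeg α ≤ d} := (Finsupp.finite_of_degree_le d).to_subtype
  let L := ExtendByZero.linearMap ℝ (Subtype.val : {α : Fin p →₀ ℕ // fdeg α ≤ d} → _)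
  have hmom : momVec p d = L ∘ fun ξ α => ∏ i, ξ i ^ (α : Fin p →₀ ℕ) i :=
    funext (momVec_eq_extend p d)
  rw [hmom, image_comp, ← L.image_convexHull]
  exact ((hS.image (by fun_prop)).convexHull).image L.continuous_of_finiteDimensional

lemma momCone_eq_hull (p d : ℕ) (S : Set (Fin p → ℝ)) :
    momCone p d S = PointedCone.hull ℝ (momVec p d '' S) := by
  ext z
  rw [SetLike.mem_coe, Submodule.mem_span_set']
  constructor
  · rintro ⟨r, θ, u, hθ, hu, rfl⟩
    exact ⟨r, fun i => ⟨θ i, hθ i⟩, fun i => ⟨momVec p d (u i), u i, hu i, rfl⟩, rfl⟩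
  · rintro ⟨r, θ, g, rfl⟩
    choose u hu hug using fun i => (g i).2
    exact ⟨r, fun i => θ i, u, fun i => (θ i).2, hu, by simp [hug]⟩

theorem stmt_8_general (p d : ℕ) (S : Set (Fin p → ℝ))
    (hcompact : IsCompact S) :
    IsClosed (momCone p d S) := by
  rw [momCone_eq_hull]
  refine PointedCone.isClosed_hull_of_isCompact_convexHull
    (isCompact_convexHull_image_momVec p d hcompact) (ContinuousLinearMap.proj 0) ?_
  rintro _ ⟨ξ, -, rfl⟩
  exact momVec_apply_zero p d ξ

/-- If `S ⊆ ℝᵖ` is compact and nonempty, then the truncated moment cone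
`R_d(S) = cone{[ξ]_d : ξ ∈ S}` is closed. -/
theorem stmt_8 (p d : ℕ) (S : Set (Fin p → ℝ)) (hS : S.Nonempty)
    (hcompact : IsCompact S) :
    IsClosed (momCone p d S) :=
  stmt_8_general p d S hcompact
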